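/- Let G be a finite group and H ≤ F ≤ G subgroups. Let t ∈ G satisfy t² = e, F ∩ tHt⁻¹ ⊆ H, and suppose H' := Stab_H(tH) = H ∩ tHt⁻¹ satisfies H' ⊆ C_G(t). Let f ∈ F satisfy f² ∈ H and ft = tf. Then Stab_H(tfH) = Stab_{H'}(fH') =: S, and for every irreducible complex character χ of S one has ν₂(tf,χ,H) = ν₂(f,χ,H'), the left side being the indicator computed with respect to the subgroup H and the right side with respect to the subgroup H'. -/
import Mathlib


open scoped BigOperators Pointwise Classical
open CategoryTheory

/-- For `H ≤ G` and `g ∈ G`, the stabilizer `S(g) = Stab_H(gH) = H ∩ gHg⁻¹`. -/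
def stabCoset {G : Type*} [Group G] (H : Subgroup G) (g : G) : Subgroup G :=
  H ⊓ Subgroup.map (MulAut.conj g).toMonoidHom H

/-- The `m`-th Frobenius–Schur indicator `ν_m(g,χ)` of the simple object of the
group-theoretical fusion category `C(G,H)` attached to `(g,χ)`:
`ν_m(g,χ) = (1/|S(g)|) Σ_{x ∈ H, (gx)^m ∈ H} conj(χ((gx)^m))`
(recall that for `x ∈ H`, `(gx)^m ∈ H` iff `(gx)^m ∈ S(g)`). -/
noncomputable def nuInd {G : Type*} [Group G] (H : Subgroup G) (g : G) (m : ℕ)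
    (χ : ↥(stabCoset H g) → ℂ) : ℂ :=
  (Nat.card ↥(stabCoset H g) : ℂ)⁻¹ *
    ∑ᶠ x : G, if h : x ∈ H ∧ (g * x) ^ m ∈ stabCoset H g
      then (starRingEnd ℂ) (χ ⟨(g * x) ^ m, h.2⟩) else 0

/-- The classical second Frobenius–Schur indicator `ν₂(θ) = (1/|K|) Σ_{x∈K} θ(x²)`. -/
noncomputable def fsInd {K : Type*} [Group K] (θ : K → ℂ) : ℂ :=
  (Nat.card K : ℂ)⁻¹ * ∑ᶠ x : K, θ (x ^ 2)

lemma mem_stabCoset_iff {G : Type*} [Group G] (H : Subgroup G) (g x : G) :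
    x ∈ stabCoset H g ↔ x ∈ H ∧ g⁻¹ * x * g ∈ H := by
  rw [stabCoset, Subgroup.mem_inf, Subgroup.mem_map]
  constructor
  · rintro ⟨h1, y, hy, rfl⟩
    refine ⟨h1, ?_⟩
    simpa [MulAut.conj_apply, mul_assoc] using hy
  · rintro ⟨h1, h2⟩
    exact ⟨h1, ⟨g⁻¹ * x * g, h2, by simp [MulAut.conj_apply]; group⟩⟩

/-- Let `H ≤ F ≤ G`, `t ∈ G` with `t² = e`, `F ∩ tHt⁻¹ ⊆ H`, and `H' = Stab_H(tH) ⊆ C_G(t)`.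
Let `f ∈ F` with `f² ∈ H` and `ft = tf`. Then `Stab_H(tfH) = Stab_{H'}(fH')` and
`ν₂(tf,χ,H) = ν₂(f,χ,H')` for every irreducible complex character `χ` of this common
stabilizer (the left indicator computed with respect to `H`, the right one with respect
to `H'`). -/
theorem stmt_8 {G : Type} [Group G] [Finite G] (H F : Subgroup G) (hHF : H ≤ F) (t : G)
    (ht : t ^ 2 = 1)
    (hcap : ∀ x : G, x ∈ F → x ∈ Subgroup.map (MulAut.conj t).toMonoidHom H → x ∈ H)
    (hcent : stabCoset H t ≤ Subgroup.centralizer {t})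
    (f : G) (hf : f ∈ F) (hf2 : f ^ 2 ∈ H) (hft : f * t = t * f) :
    stabCoset H (t * f) = stabCoset (stabCoset H t) f ∧
    ∀ (V : FDRep ℂ ↥(stabCoset H (t * f))), Simple V →
      nuInd H (t * f) 2 V.character =
        nuInd (stabCoset H t) f 2
          (fun x => if h : (x : G) ∈ stabCoset H (t * f)
            then V.character ⟨(x : G), h⟩ else 0) := by
  have htt : t * t = 1 := by rw [← pow_two, ht]
  have htinv : t⁻¹ = t := inv_eq_of_mul_eq_one_right htt
  have hftf : f⁻¹ * t * f = t := by
    rw [mul_assoc, ← hft, ← mul_assoc, inv_mul_cancel, one_mul]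
  have hftinv : f⁻¹ * t = t * f⁻¹ := by
    have h := congrArg (· * f⁻¹) hftf
    simpa [mul_assoc] using h
  -- if x commutes with t then t x t = x
  have hfix : ∀ x : G, x * t = t * x → t * x * t = x := by
    intro x hxt
    calc t * x * t = t * (x * t) := by group
      _ = t * (t * x) := by rw [hxt]
      _ = (t * t) * x := by group
      _ = x := by rw [htt, one_mul]
  have hfix' : ∀ x : G, x * t = t * x → t⁻¹ * x * t = x := by
    intro x hxt; rw [htinv]; exact hfix x hxt
  -- elements of H' commute with t
  have hcomm_of_mem : ∀ x : G, x ∈ stabCoset H t → x * t = t * x := by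
    intro x hx
    exact (Subgroup.mem_centralizer_iff.mp (hcent hx) t rfl).symm
  -- x ∈ H commuting with t lies in H'
  have hmemH' : ∀ x : G, x ∈ H → x * t = t * x → x ∈ stabCoset H t := by
    intro x hx hxt
    rw [mem_stabCoset_iff]
    exact ⟨hx, by rw [hfix' x hxt]; exact hx⟩
  -- key: x ∈ H with t x t⁻¹ ∈ F commutes with t
  have hkey : ∀ x : G, x ∈ H → t * x * t⁻¹ ∈ F → x * t = t * x := by
    intro x hx hzF
    have hzH : t * x * t⁻¹ ∈ H := hcap _ hzF ⟨x, hx, rfl⟩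
    have hz' : t * x * t⁻¹ ∈ stabCoset H t := by
      rw [mem_stabCoset_iff]
      refine ⟨hzH, ?_⟩
      have e : t⁻¹ * (t * x * t⁻¹) * t = x := by group
      rw [e]; exact hx
    have hc := hcomm_of_mem _ hz'
    have h1 : (t * x * t⁻¹) * t = t * x := by group
    have h2 : t * (t * x * t⁻¹) = x * t := by
      rw [htinv]
      calc t * (t * x * t) = (t * t) * (x * t) := by group
        _ = x * t := by rw [htt, one_mul]
    rw [h1, h2] at hc
    exact hc.symm
  -- the square condition puts t x t⁻¹ in F
  have hF1 : ∀ x : G, x ∈ H → ((t * f) * x) ^ 2 ∈ H → t * x * t⁻¹ ∈ F := by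
    intro x hx h2
    have e1 : t * x * t⁻¹ = f⁻¹ * (((t * f) * x) ^ 2 * (x⁻¹ * f⁻¹)) := by
      have h1 : ((t * f) * x) ^ 2 * (x⁻¹ * f⁻¹) = t * f * x * t := by
        rw [pow_two]; group
      rw [h1, htinv]
      calc t * x * t = (f⁻¹ * t * f) * x * t := by rw [hftf]
        _ = f⁻¹ * (t * f * x * t) := by group
    rw [e1]
    exact mul_mem (inv_mem hf)
      (mul_mem (hHF h2) (mul_mem (inv_mem (hHF hx)) (inv_mem hf)))
  -- membership in Stab_H(tfH) puts t x t⁻¹ in F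
  have hF2 : ∀ x : G, x ∈ H → (t * f)⁻¹ * x * (t * f) ∈ H → t * x * t⁻¹ ∈ F := by
    intro x hx h2
    have e2 : t * x * t⁻¹ = f * ((t * f)⁻¹ * x * (t * f)) * f⁻¹ := by
      have h1 : f * ((t * f)⁻¹ * x * (t * f)) * f⁻¹ = t⁻¹ * x * t := by group
      rw [h1, htinv]
    rw [e2]
    exact mul_mem (mul_mem hf (hHF h2)) (inv_mem hf)
  -- squares agree when x commutes with t
  have heqpow : ∀ x : G, x * t = t * x → ((t * f) * x) ^ 2 = (f * x) ^ 2 := by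
    intro x hxt
    rw [pow_two, pow_two]
    calc t * f * x * (t * f * x) = t * (f * (x * t)) * (f * x) := by group
      _ = t * (f * (t * x)) * (f * x) := by rw [hxt]
      _ = t * ((f * t) * (x * (f * x))) := by group
      _ = t * ((t * f) * (x * (f * x))) := by rw [hft]
      _ = (t * t) * ((f * x) * (f * x)) := by group
      _ = f * x * (f * x) := by rw [htt, one_mul]
  -- Claim 1
  have hS : stabCoset H (t * f) = stabCoset (stabCoset H t) f := by
    ext x
    rw [mem_stabCoset_iff, mem_stabCoset_iff, mem_stabCoset_iff, mem_stabCoset_iff]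
    constructor
    · rintro ⟨hx, h2⟩
      have hxt : x * t = t * x := hkey x hx (hF2 x hx h2)
      have htxt : t⁻¹ * x * t = x := hfix' x hxt
      have hfxf : f⁻¹ * x * f ∈ H := by
        have e : (t * f)⁻¹ * x * (t * f) = f⁻¹ * x * f := by
          calc (t * f)⁻¹ * x * (t * f) = f⁻¹ * (t⁻¹ * x * t) * f := by group
            _ = f⁻¹ * x * f := by rw [htxt]
        rwa [e] at h2
      refine ⟨⟨hx, by rw [htxt]; exact hx⟩, hfxf, ?_⟩
      have e3 : t⁻¹ * (f⁻¹ * x * f) * t = f⁻¹ * x * f := by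
        rw [htinv]
        calc t * (f⁻¹ * x * f) * t = (t * f⁻¹) * x * (f * t) := by group
          _ = (f⁻¹ * t) * x * (t * f) := by rw [← hftinv, hft]
          _ = f⁻¹ * (t * x * t) * f := by group
          _ = f⁻¹ * x * f := by rw [hfix x hxt]
      rw [e3]; exact hfxf
    · rintro ⟨⟨hx, hx2⟩, hfxf, -⟩
      have hxt : x * t = t * x :=
        hcomm_of_mem x ((mem_stabCoset_iff H t x).mpr ⟨hx, hx2⟩)
      refine ⟨hx, ?_⟩
      have e : (t * f)⁻¹ * x * (t * f) = f⁻¹ * x * f := by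
        calc (t * f)⁻¹ * x * (t * f) = f⁻¹ * (t⁻¹ * x * t) * f := by group
          _ = f⁻¹ * x * f := by rw [hfix' x hxt]
      rw [e]; exact hfxf
  -- equivalence of summation conditions
  have hcond : ∀ x : G, (x ∈ H ∧ ((t * f) * x) ^ 2 ∈ stabCoset H (t * f)) ↔
      (x ∈ stabCoset H t ∧ (f * x) ^ 2 ∈ stabCoset (stabCoset H t) f) := by
    intro x
    constructor
    · rintro ⟨hx, h2⟩
      have hmemH : ((t * f) * x) ^ 2 ∈ H := ((mem_stabCoset_iff _ _ _).mp h2).1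
      have hxt : x * t = t * x := hkey x hx (hF1 x hx hmemH)
      exact ⟨hmemH' x hx hxt, by rw [← hS, ← heqpow x hxt]; exact h2⟩
    · rintro ⟨hx', h2⟩
      have hx : x ∈ H := ((mem_stabCoset_iff _ _ _).mp hx').1
      have hxt : x * t = t * x := hcomm_of_mem x hx'
      exact ⟨hx, by rw [heqpow x hxt, hS]; exact h2⟩
  refine ⟨hS, ?_⟩
  intro V _
  rw [nuInd, nuInd]
  have hcard : (Nat.card ↥(stabCoset H (t * f)) : ℂ) =
      Nat.card ↥(stabCoset (stabCoset H t) f) := by rw [hS]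
  rw [hcard]
  congr 1
  apply finsum_congr
  intro x
  by_cases hC : x ∈ H ∧ ((t * f) * x) ^ 2 ∈ stabCoset H (t * f)
  · rw [dif_pos hC, dif_pos ((hcond x).mp hC)]
    have hxt : x * t = t * x :=
      hkey x hC.1 (hF1 x hC.1 ((mem_stabCoset_iff _ _ _).mp hC.2).1)
    have heq : ((t * f) * x) ^ 2 = (f * x) ^ 2 := heqpow x hxt
    have hin : (f * x) ^ 2 ∈ stabCoset H (t * f) := heq ▸ hC.2
    show (starRingEnd ℂ) (V.character ⟨((t * f) * x) ^ 2, hC.2⟩) =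
      (starRingEnd ℂ) (if h : ((f * x) ^ 2 : G) ∈ stabCoset H (t * f)
        then V.character ⟨(f * x) ^ 2, h⟩ else 0)
    rw [dif_pos hin]
    exact congrArg _ (congrArg _ (Subtype.ext heq))
  · rw [dif_neg hC, dif_neg (fun h => hC ((hcond x).mpr h))]
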